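/- arXiv:2202.02816 — 3 statements merged into one kernel-verified Lean document; each statement's English description precedes it below -/
import Mathlib

section
/- Let P ≤ Sym({1,...,k}) be a permutation group with k even, and let X be the set of subsets Λ ⊆ {1,...,k} with |Λ| ≠ k/2. If |P| < 2^(μ(P)/2 - 1), where μ(P) is the minimal degree of P (the minimal number of points moved by a non-identity element of P), then P has a regular orbit on X, i.e. there exists Λ ∈ X whose setwise stabiliser in P is trivial. -/
/-!
A subset is fixed by a permutation `σ` exactly when it is a union of cycles of `σ`, so `σ` fixes
`2 ^ (number of cycles)` subsets; cycles through moved points have length at least `2`, so a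
permutation moving `m` points fixes at most `2 ^ (k - m / 2)` subsets. If no subset of size
`≠ k / 2` had trivial stabiliser, these subsets (at least `2 ^ (k - 1)` of them) would be covered by
the fixed subsets of the `|P| - 1` non-identity elements of `P`, each fixing at most
`2 ^ (k - μ(P) / 2)` subsets, which contradicts `|P| < 2 ^ (μ(P) / 2 - 1)`.
-/

/-- The number of points of `Fin k` moved by the permutation `σ`. -/
noncomputable def movedCard {k : ℕ} (σ : Equiv.Perm (Fin k)) : ℕ :=
  (Finset.univ.filter fun i => σ i ≠ i).card

/-- The minimal degree `μ(P)` of a permutation group `P ≤ Sym(Fin k)`: the minimal number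
of points moved by a non-identity element of `P`. -/
noncomputable def minDeg {k : ℕ} (P : Subgroup (Equiv.Perm (Fin k))) : ℕ :=
  sInf {n | ∃ σ ∈ P, σ ≠ 1 ∧ movedCard σ = n}

open Finset Equiv
open scoped Pointwise

namespace Equiv.Perm

variable {α : Type*} [DecidableEq α]

theorem SameCycle.mem_iff_of_image_eq {σ : Perm α} {s : Finset α} (hs : s.image σ = s)
    {x y : α} (hxy : σ.SameCycle x y) : x ∈ s ↔ y ∈ s := by
  obtain ⟨n, rfl⟩ := hxy
  have hn : σ ^ n • s = s := zpow_mem (show σ ∈ MulAction.stabilizer (Perm α) s from hs) n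
  rw [← Finset.smul_mem_smul_finset_iff (σ ^ n), hn]
  rfl

variable [Fintype α]

theorem card_filter_image_eq_le_two_pow (σ : Perm α) :
    #{s : Finset α | s.image σ = s} ≤ 2 ^ Nat.card (Quotient (SameCycle.setoid σ)) := by
  classical
  have mk_mem_iff {s : Finset α} (hs : s.image σ = s) (x : α) :
      (⟦x⟧ : Quotient (SameCycle.setoid σ)) ∈ s.image (⟦·⟧) ↔ x ∈ s := by
    refine ⟨fun hx => ?_, mem_image_of_mem _⟩
    obtain ⟨y, hy, hyx⟩ := mem_image.1 hx
    exact (SameCycle.mem_iff_of_image_eq hs (Quotient.exact hyx)).1 hy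
  calc #{s : Finset α | s.image σ = s}
      ≤ #(univ : Finset (Finset (Quotient (SameCycle.setoid σ)))) := by
        refine card_le_card_of_injOn (·.image (⟦·⟧)) (fun _ _ => mem_coe.2 (mem_univ _)) ?_
        intro s hs t ht hst
        ext x
        rw [← mk_mem_iff (mem_filter.1 hs).2, show s.image _ = t.image _ from hst,
          mk_mem_iff (mem_filter.1 ht).2]
    _ = 2 ^ Nat.card (Quotient (SameCycle.setoid σ)) := by
        rw [card_univ, Fintype.card_finset, Nat.card_eq_fintype_card]

theorem two_add_card_filter_sameCycle_support_le (σ : Perm α) (x : α) :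
    2 + #{y ∈ σ.support | σ.SameCycle y x} ≤ 2 * #{y | σ.SameCycle y x} := by
  by_cases hx : σ x = x
  · have hempty : {y ∈ σ.support | σ.SameCycle y x} = ∅ :=
      filter_eq_empty_iff.2 fun y hy hyx => mem_support.1 hy ((hyx.apply_eq_self_iff).2 hx)
    have hpos : 0 < #{y | σ.SameCycle y x} :=
      card_pos.2 ⟨x, mem_filter.2 ⟨mem_univ _, SameCycle.refl σ x⟩⟩
    rw [hempty, card_empty]
    omega
  · have hcycle : {y ∈ σ.support | σ.SameCycle y x} = ({y | σ.SameCycle y x} : Finset α) := by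
      ext y
      simp only [mem_filter, mem_univ, true_and, mem_support, and_iff_right_iff_imp]
      exact fun hyx hy => hx ((hyx.apply_eq_self_iff).1 hy)
    have hpair : {x, σ x} ⊆ ({y | σ.SameCycle y x} : Finset α) := by
      intro y hy
      rcases mem_insert.1 hy with rfl | hy
      · exact mem_filter.2 ⟨mem_univ _, SameCycle.refl σ y⟩
      · rw [mem_singleton.1 hy]
        exact mem_filter.2 ⟨mem_univ _, sameCycle_apply_left.2 (SameCycle.refl σ x)⟩
    have htwo := card_le_card hpair
    rw [card_pair (Ne.symm hx)] at htwo
    rw [hcycle]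
    omega

theorem two_mul_card_quotient_sameCycle_add_card_support_le (σ : Perm α) :
    2 * Nat.card (Quotient (SameCycle.setoid σ)) + #σ.support ≤ 2 * Fintype.card α := by
  classical
  set q : α → Quotient (SameCycle.setoid σ) := (⟦·⟧)
  have hfiber (c) : 2 + #{y ∈ σ.support | q y = c} ≤ 2 * #{y | q y = c} := by
    induction c using Quotient.inductionOn with
    | h x =>
      convert two_add_card_filter_sameCycle_support_le σ x using 4
      all_goals simp only [q, Quotient.eq]; rfl
  calc 2 * Nat.card (Quotient (SameCycle.setoid σ)) + #σ.support
      = ∑ c, (2 + #{y ∈ σ.support | q y = c}) := by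
        rw [sum_add_distrib, sum_const, card_univ, Nat.card_eq_fintype_card, smul_eq_mul,
          mul_comm, card_eq_sum_card_fiberwise (fun _ _ => mem_coe.2 (mem_univ (q _)))]
    _ ≤ ∑ c, 2 * #{y | q y = c} := sum_le_sum fun c _ => hfiber c
    _ = 2 * Fintype.card α := by
        rw [← mul_sum, ← card_univ,
          card_eq_sum_card_fiberwise (fun _ _ => mem_coe.2 (mem_univ (q _)))]

theorem card_filter_image_eq_le_rpow (σ : Perm α) :
    (#{s : Finset α | s.image σ = s} : ℝ) ≤ 2 ^ ((Fintype.card α : ℝ) - #σ.support / 2) := by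
  have horbits : (Nat.card (Quotient (SameCycle.setoid σ)) : ℝ) ≤
      Fintype.card α - #σ.support / 2 := by
    have := two_mul_card_quotient_sameCycle_add_card_support_le σ
    have : (2 * Nat.card (Quotient (SameCycle.setoid σ)) + #σ.support : ℝ) ≤
        2 * Fintype.card α := by exact_mod_cast this
    linarith
  calc (#{s : Finset α | s.image σ = s} : ℝ)
      ≤ (2 : ℝ) ^ (Nat.card (Quotient (SameCycle.setoid σ)) : ℝ) := by
        rw [Real.rpow_natCast]; exact_mod_cast card_filter_image_eq_le_two_pow σ
    _ ≤ 2 ^ ((Fintype.card α : ℝ) - #σ.support / 2) :=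
        Real.rpow_le_rpow_of_exponent_le one_le_two horbits

end Equiv.Perm

theorem Finset.two_pow_card_le_two_mul_card_filter_two_mul_card_ne {α : Type*} [Fintype α]
    [DecidableEq α] [Nonempty α] :
    2 ^ Fintype.card α ≤ 2 * #{s : Finset α | 2 * #s ≠ Fintype.card α} := by
  obtain ⟨a⟩ := ‹Nonempty α›
  set toggle : Finset α → Finset α := fun s => if a ∈ s then s.erase a else insert a s
  have htoggle : Function.Involutive toggle := fun s => by
    by_cases h : a ∈ s <;> simp [toggle, h]
  have hcard (s) : #(toggle s) + 1 = #s ∨ #(toggle s) = #s + 1 := by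
    by_cases h : a ∈ s
    · simp only [toggle, if_pos h, card_erase_add_one h, true_or]
    · simp only [toggle, if_neg h, card_insert_of_notMem h, or_true]
  have hbalanced : #{s : Finset α | ¬2 * #s ≠ Fintype.card α} ≤
      #{s : Finset α | 2 * #s ≠ Fintype.card α} := by
    refine card_le_card_of_injOn toggle (fun s hs => ?_) htoggle.injective.injOn
    simp only [coe_filter, mem_univ, true_and, not_not, Set.mem_ofPred_eq] at hs ⊢
    rcases hcard s with h | h <;> omega
  have htotal := card_filter_add_card_filter_not (s := (univ : Finset (Finset α)))
    (fun s => 2 * #s ≠ Fintype.card α)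
  rw [card_univ, Fintype.card_finset] at htotal
  omega

theorem Subgroup.exists_forall_image_eq_imp_eq_one_of_card_lt {α : Type*} [Fintype α]
    [DecidableEq α] (P : Subgroup (Perm α)) (X : Finset (Finset α)) (B : ℝ)
    (hB : ∀ σ ∈ P, σ ≠ 1 → (#{s : Finset α | s.image σ = s} : ℝ) ≤ B)
    (hX : ((Nat.card P : ℝ) - 1) * B < #X) :
    ∃ s ∈ X, ∀ σ ∈ P, s.image σ = s → σ = 1 := by
  classical
  by_contra! hfixed
  set N : Finset (Perm α) := (univ.filter (· ∈ P)).erase 1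
  have hN : (#N : ℝ) = Nat.card P - 1 := by
    rw [card_erase_of_mem (mem_filter.2 ⟨mem_univ _, P.one_mem⟩), Nat.cast_sub (card_pos.2
      ⟨1, mem_filter.2 ⟨mem_univ _, P.one_mem⟩⟩), Nat.card_eq_fintype_card, Fintype.card_subtype]
    simp
  have hcover : X ⊆ N.biUnion fun σ => {s : Finset α | s.image σ = s} := by
    intro s hs
    obtain ⟨σ, hσ, hfix, hne⟩ := hfixed s hs
    exact mem_biUnion.2 ⟨σ, mem_erase.2 ⟨hne, mem_filter.2 ⟨mem_univ _, hσ⟩⟩,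
      mem_filter.2 ⟨mem_univ _, hfix⟩⟩
  have : (#X : ℝ) ≤ ((Nat.card P : ℝ) - 1) * B :=
    calc (#X : ℝ) ≤ ∑ σ ∈ N, (#{s : Finset α | s.image σ = s} : ℝ) := by
          exact_mod_cast (card_le_card hcover).trans card_biUnion_le
      _ ≤ ∑ σ ∈ N, B := sum_le_sum fun σ hσ =>
          hB σ (mem_filter.1 (mem_of_mem_erase hσ)).2 (ne_of_mem_erase hσ)
      _ = ((Nat.card P : ℝ) - 1) * B := by rw [sum_const, nsmul_eq_mul, hN]
  linarith

theorem minDeg_le_movedCard {k : ℕ} {P : Subgroup (Perm (Fin k))} {σ : Perm (Fin k)}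
    (hσ : σ ∈ P) (hne : σ ≠ 1) : minDeg P ≤ movedCard σ :=
  Nat.sInf_le ⟨σ, hσ, hne, rfl⟩

theorem minDeg_le {k : ℕ} (P : Subgroup (Perm (Fin k))) : minDeg P ≤ k := by
  rcases Set.eq_empty_or_nonempty {n | ∃ σ ∈ P, σ ≠ 1 ∧ movedCard σ = n} with hS | hS
  · simp [minDeg, hS]
  · obtain ⟨σ, -, -, hσ⟩ := Nat.sInf_mem hS
    rw [minDeg, ← hσ]
    exact (card_filter_le _ _).trans (card_univ.trans (Fintype.card_fin k)).le

theorem two_lt_minDeg_of_card_lt {k : ℕ} {P : Subgroup (Perm (Fin k))}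
    (h : (Nat.card P : ℝ) < 2 ^ ((minDeg P : ℝ) / 2 - 1)) : 2 < minDeg P := by
  by_contra! hμ
  have : (2 : ℝ) ^ ((minDeg P : ℝ) / 2 - 1) ≤ 1 :=
    Real.rpow_le_one_of_one_le_of_nonpos one_le_two (by rify at hμ; linarith)
  have : (1 : ℝ) ≤ Nat.card P := by exact_mod_cast Nat.card_pos
  linarith

theorem card_filter_image_eq_le_rpow_minDeg {k : ℕ} {P : Subgroup (Perm (Fin k))}
    {σ : Perm (Fin k)} (hσ : σ ∈ P) (hne : σ ≠ 1) :
    (#{s : Finset (Fin k) | s.image σ = s} : ℝ) ≤ 2 ^ ((k : ℝ) - minDeg P / 2) := by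
  refine (Perm.card_filter_image_eq_le_rpow σ).trans
    (Real.rpow_le_rpow_of_exponent_le one_le_two ?_)
  have : (minDeg P : ℝ) ≤ #σ.support := by exact_mod_cast minDeg_le_movedCard hσ hne
  rw [Fintype.card_fin]
  linarith

theorem stmt1_general {k : ℕ} (P : Subgroup (Equiv.Perm (Fin k)))
    (h : (Nat.card P : ℝ) < 2 ^ ((minDeg P : ℝ) / 2 - 1)) :
    ∃ Λ : Finset (Fin k), 2 * Λ.card ≠ k ∧ ∀ σ ∈ P, Λ.image ⇑σ = Λ → σ = 1 := by
  have : Nonempty (Fin k) :=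
    ⟨⟨0, by have := two_lt_minDeg_of_card_lt h; have := minDeg_le P; omega⟩⟩
  have hgood := two_pow_card_le_two_mul_card_filter_two_mul_card_ne (α := Fin k)
  rw [Fintype.card_fin] at hgood
  have hcount : ((Nat.card P : ℝ) - 1) * 2 ^ ((k : ℝ) - minDeg P / 2) <
      #{Λ : Finset (Fin k) | 2 * #Λ ≠ k} :=
    calc ((Nat.card P : ℝ) - 1) * 2 ^ ((k : ℝ) - minDeg P / 2)
        < 2 ^ ((minDeg P : ℝ) / 2 - 1) * 2 ^ ((k : ℝ) - minDeg P / 2) := by gcongr; linarith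
      _ = 2 ^ (k : ℝ) / 2 := by
        rw [← Real.rpow_add two_pos, ← Real.rpow_sub_one two_ne_zero]; ring_nf
      _ ≤ #{Λ : Finset (Fin k) | 2 * #Λ ≠ k} := by
        rw [Real.rpow_natCast, div_le_iff₀ two_pos]
        exact_mod_cast (mul_comm _ _).trans_ge hgood
  obtain ⟨Λ, hΛ, hregular⟩ := P.exists_forall_image_eq_imp_eq_one_of_card_lt _ _
    (fun σ hσ hne => card_filter_image_eq_le_rpow_minDeg hσ hne) hcount
  exact ⟨Λ, (mem_filter.1 hΛ).2, hregular⟩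

/-- If `k` is even and `|P| < 2^(μ(P)/2 - 1)`, then `P` has a regular orbit on the set `X`
of subsets of `{1,...,k}` of size different from `k/2`, i.e. there is a subset `Λ` with
`|Λ| ≠ k/2` whose setwise stabiliser in `P` is trivial. -/
theorem stmt1 {k : ℕ} (hk : Even k) (P : Subgroup (Equiv.Perm (Fin k)))
    (h : (Nat.card P : ℝ) < 2 ^ ((minDeg P : ℝ) / 2 - 1)) :
    ∃ Λ : Finset (Fin k), 2 * Λ.card ≠ k ∧ ∀ σ ∈ P, Λ.image ⇑σ = Λ → σ = 1 :=
  stmt1_general P h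
end

section
/- Suppose P ≤ Sym({1,...,k}) has distinguishing number D and the number t_D of unordered distinguishing partitions into D nonempty parts equals |P|/D!. Then every distinguishing partition of {1,...,k} into D parts has all parts of equal size; in particular D divides k. -/
/-- A (unordered) partition of `Fin k` into nonempty parts, given as a finset of parts. -/
def IsPart (k : ℕ) (B : Finset (Finset (Fin k))) : Prop :=
  (∀ p ∈ B, p.Nonempty) ∧
  (∀ p ∈ B, ∀ q ∈ B, p ≠ q → Disjoint p q) ∧
  (∀ i : Fin k, ∃ p ∈ B, i ∈ p)

/-- A partition is distinguishing for `P` if the only element of `P` stabilising every part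
setwise is the identity. -/
def IsDisting {k : ℕ} (P : Subgroup (Equiv.Perm (Fin k))) (B : Finset (Finset (Fin k))) : Prop :=
  ∀ σ ∈ P, (∀ p ∈ B, p.image ⇑σ = p) → σ = 1

/-- `tpart P m` is the number of unordered distinguishing partitions of `Fin k` for `P`
with `m` nonempty parts. -/
noncomputable def tpart {k : ℕ} (P : Subgroup (Equiv.Perm (Fin k))) (m : ℕ) : ℕ :=
  Set.ncard {B : Finset (Finset (Fin k)) | IsPart k B ∧ IsDisting P B ∧ B.card = m}

/-- The distinguishing number `D(P)`: the minimal number of parts in a distinguishing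
partition for `P`. -/
noncomputable def distNum {k : ℕ} (P : Subgroup (Equiv.Perm (Fin k))) : ℕ :=
  sInf {m | ∃ B : Finset (Finset (Fin k)), IsPart k B ∧ IsDisting P B ∧ B.card = m}

/-! A permutation `σ ∈ P` moves a partition `B` to `σ • B`, again a distinguishing partition
with the same number of parts. If `B` is distinguishing, only `1` fixes each part of `B`, so the
setwise stabiliser of `B` embeds into the permutations of its `D` parts. Orbit–stabiliser then
gives `|P| ≤ t_D · D!`, and equality forces every permutation of the parts of `B` to be induced
by `P`: any part is carried onto any other, so all parts have the same size. -/

open Pointwise MulAction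

theorem MulAction.bijective_of_card_eq_ncard_mul_card {G X S : Type*} [Group G] [MulAction G X]
    {x : X} {T : Set X} (hT : T.Finite) (horbit : orbit G x ⊆ T) [Finite S]
    {φ : stabilizer G x → S} (hφ : Function.Injective φ)
    (hG : Nat.card G = T.ncard * Nat.card S) :
    Function.Bijective φ := by
  have orbit_stabilizer : Nat.card G = (orbit G x).ncard * Nat.card (stabilizer G x) := by
    rw [← index_stabilizer, mul_comm, Subgroup.card_mul_index]
  have horbit_le : (orbit G x).ncard ≤ T.ncard := Set.ncard_le_ncard horbit hT
  have hstab_le : Nat.card (stabilizer G x) ≤ Nat.card S := Nat.card_le_card_of_injective φ hφ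
  have horbit_pos : 0 < (orbit G x).ncard :=
    (Set.ncard_pos (hT.subset horbit)).2 ⟨x, mem_orbit_self x⟩
  refine (Nat.bijective_iff_injective_and_card φ).2 ⟨hφ, hstab_le.antisymm ?_⟩
  by_contra! hlt
  refine lt_irrefl (Nat.card G) ?_
  calc Nat.card G = (orbit G x).ncard * Nat.card (stabilizer G x) := orbit_stabilizer
    _ < (orbit G x).ncard * Nat.card S := Nat.mul_lt_mul_of_pos_left hlt horbit_pos
    _ ≤ T.ncard * Nat.card S := Nat.mul_le_mul_right _ horbit_le
    _ = Nat.card G := hG.symm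

section

variable {k : ℕ} {P : Subgroup (Equiv.Perm (Fin k))} {B : Finset (Finset (Fin k))}

theorem isDisting_iff_smul :
    IsDisting P B ↔ ∀ σ ∈ P, (∀ p ∈ B, σ • p = p) → σ = 1 := by
  simp [IsDisting, Finset.smul_finset_def, Equiv.Perm.smul_def]

theorem IsPart.smul (hB : IsPart k B) (σ : Equiv.Perm (Fin k)) : IsPart k (σ • B) := by
  obtain ⟨hne, hdisj, hcover⟩ := hB
  refine ⟨?_, ?_, fun i => ?_⟩
  · simp only [Finset.mem_smul_finset, forall_exists_index, and_imp]
    rintro _ p hp rfl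
    exact (hne p hp).smul_finset
  · simp only [Finset.mem_smul_finset, forall_exists_index, and_imp]
    rintro _ p hp rfl _ q hq rfl hσpq
    have hpq : p ≠ q := by rintro rfl; exact hσpq rfl
    simpa [Finset.smul_finset_def] using
      (Finset.disjoint_image (MulAction.injective σ)).2 (hdisj p hp q hq hpq)
  · obtain ⟨p, hp, hip⟩ := hcover (σ⁻¹ • i)
    exact ⟨σ • p, Finset.smul_mem_smul_finset hp,
      by simpa using Finset.smul_mem_smul_finset (a := σ) hip⟩

theorem IsDisting.smul (hB : IsDisting P B) {σ : Equiv.Perm (Fin k)} (hσ : σ ∈ P) :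
    IsDisting P (σ • B) := by
  rw [isDisting_iff_smul] at hB ⊢
  intro τ hτ hfix
  have hconj : σ⁻¹ * τ * σ = 1 := by
    refine hB _ (mul_mem (mul_mem (inv_mem hσ) hτ) hσ) fun p hp => ?_
    rw [mul_smul, mul_smul, hfix _ (Finset.smul_mem_smul_finset hp), inv_smul_smul]
  simpa [mul_assoc, inv_mul_eq_one] using hconj

-- The parts of `B` are viewed as a `Set`: that is where `stabilizer` acts on its set.
theorem injective_toPerm_stabilizer (hB : IsDisting P B) :
    Function.Injective (toPerm :
      stabilizer P (B : Set (Finset (Fin k))) → Equiv.Perm (B : Set (Finset (Fin k)))) := by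
  refine (injective_iff_map_eq_one (toPermHom _ (B : Set (Finset (Fin k))))).2 ?_
  intro σ hσ
  have hfix : ∀ p ∈ B, (σ : Equiv.Perm (Fin k)) • p = p := fun p hp =>
    congrArg Subtype.val (Equiv.ext_iff.1 hσ ⟨p, hp⟩)
  exact Subtype.ext (Subtype.ext (isDisting_iff_smul.1 hB _ σ.1.2 hfix))

theorem bijective_toPerm_stabilizer_of_tpart_mul_factorial_eq {m : ℕ}
    (h : tpart P m * m.factorial = Nat.card P) (hBp : IsPart k B) (hBd : IsDisting P B)
    (hBc : B.card = m) :
    Function.Bijective (toPerm :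
      stabilizer P (B : Set (Finset (Fin k))) → Equiv.Perm (B : Set (Finset (Fin k)))) := by
  refine bijective_of_card_eq_ncard_mul_card (Set.toFinite _) ?_ (injective_toPerm_stabilizer hBd)
    (T := (↑) '' {C | IsPart k C ∧ IsDisting P C ∧ C.card = m}) ?_
  · rintro _ ⟨σ, rfl⟩
    refine ⟨(σ : Equiv.Perm (Fin k)) • B,
      ⟨hBp.smul _, hBd.smul σ.2, by rw [Finset.card_smul_finset, hBc]⟩, ?_⟩
    rw [Finset.coe_smul_finset]
    rfl
  · rw [Set.ncard_image_of_injective _ Finset.coe_injective, Nat.card_perm, Nat.card_coe_set_eq,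
      Set.ncard_coe_finset, hBc, ← h]
    rfl

theorem card_eq_of_tpart_mul_factorial_eq {m : ℕ} (h : tpart P m * m.factorial = Nat.card P)
    (hBp : IsPart k B) (hBd : IsDisting P B) (hBc : B.card = m) {p q : Finset (Fin k)}
    (hp : p ∈ B) (hq : q ∈ B) : p.card = q.card := by
  obtain ⟨σ, hσ⟩ := (bijective_toPerm_stabilizer_of_tpart_mul_factorial_eq h hBp hBd hBc).2
    (Equiv.swap ⟨p, hp⟩ ⟨q, hq⟩)
  have hσpq : (σ : Equiv.Perm (Fin k)) • p = q := by
    have := congrArg Subtype.val (Equiv.ext_iff.1 hσ ⟨p, hp⟩)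
    rw [toPerm_apply, Equiv.swap_apply_left] at this
    exact this
  rw [← hσpq, Finset.card_smul_finset]

theorem IsPart.sum_card (hB : IsPart k B) : ∑ p ∈ B, p.card = k := by
  have hcover : B.biUnion id = Finset.univ :=
    Finset.eq_univ_of_forall fun i => by simpa using hB.2.2 i
  simpa [hcover] using (Finset.card_biUnion (t := id) fun p hp q hq => hB.2.1 p hp q hq).symm

theorem IsPart.card_dvd_of_forall_card_eq (hB : IsPart k B)
    (h : ∀ p ∈ B, ∀ q ∈ B, p.card = q.card) : B.card ∣ k := by
  have hsum := hB.sum_card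
  rcases B.eq_empty_or_nonempty with rfl | ⟨p₀, hp₀⟩
  · simp [← hsum]
  · rw [Finset.sum_const_nat fun p hp => h p hp p₀ hp₀] at hsum
    exact ⟨p₀.card, hsum.symm⟩

theorem isPart_image_singleton : IsPart k (Finset.univ.image singleton) := by
  refine ⟨by simp, ?_, fun i => ⟨{i}, by simp, by simp⟩⟩
  simp only [Finset.mem_image, Finset.mem_univ, true_and]
  rintro _ ⟨i, rfl⟩ _ ⟨j, rfl⟩ hij
  exact Finset.disjoint_singleton.2 fun h => hij (h ▸ rfl)

variable (P) in
theorem isDisting_image_singleton :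
    IsDisting P (Finset.univ.image singleton) := fun σ _ hfix =>
  Equiv.ext fun i => by simpa using hfix {i} (by simp)

variable (P) in
theorem exists_isPart_isDisting_card_distNum :
    ∃ B, IsPart k B ∧ IsDisting P B ∧ B.card = distNum P :=
  Nat.sInf_mem (s := {m | ∃ B, IsPart k B ∧ IsDisting P B ∧ B.card = m})
    ⟨_, _, isPart_image_singleton, isDisting_image_singleton P, rfl⟩

end

/-- If `t_{D(P)} = |P|/D(P)!` then every distinguishing partition of `{1,...,k}` for `P`
into `D(P)` parts has all parts of equal size; in particular `D(P)` divides `k`. -/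
theorem stmt5 {k : ℕ} (P : Subgroup (Equiv.Perm (Fin k)))
    (h : tpart P (distNum P) * Nat.factorial (distNum P) = Nat.card P) :
    (∀ B : Finset (Finset (Fin k)), IsPart k B → IsDisting P B → B.card = distNum P →
      ∀ p ∈ B, ∀ q ∈ B, p.card = q.card) ∧ distNum P ∣ k := by
  have equal_parts : ∀ B : Finset (Finset (Fin k)), IsPart k B → IsDisting P B →
      B.card = distNum P → ∀ p ∈ B, ∀ q ∈ B, p.card = q.card :=
    fun B hBp hBd hBc p hp q hq => card_eq_of_tpart_mul_factorial_eq h hBp hBd hBc hp hq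
  obtain ⟨B, hBp, hBd, hBc⟩ := exists_isPart_isDisting_card_distNum P
  refine ⟨equal_parts, ?_⟩
  rw [← hBc]
  exact hBp.card_dvd_of_forall_card_eq (equal_parts B hBp hBd hBc)
end

section
/- Let L ≤ Sym(Γ) be a finite primitive permutation group with b(L) = 2 and r = r(L) ≥ 2 regular suborbits. Assume that the Saxl graph of every finite base-two primitive group has diameter at most 2. Then for all α, β ∈ Γ, the set Σ_L(α) = {γ : L_α ∩ L_γ = 1} meets every regular L_β-orbit on Γ. -/
/-- The wreath product `L ≀ P` in its product action on `Γ^k`, realised as a set of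
permutations of `Fin k → Γ`: the `i^σ`-th coordinate of the image of `γ` is `z i (γ i)`. -/
def WreathSet {Γ : Type} (k : ℕ) (L : Subgroup (Equiv.Perm Γ))
    (P : Subgroup (Equiv.Perm (Fin k))) : Set (Equiv.Perm (Fin k → Γ)) :=
  {g | ∃ (σ : Equiv.Perm (Fin k)) (z : Fin k → Equiv.Perm Γ),
    σ ∈ P ∧ (∀ i, z i ∈ L) ∧ g = Equiv.piCongr σ z}

/-- `(p.1, p.2)` is a regular pair (an ordered base of size 2) for the permutation set `S`. -/
def IsRegPair {Ω : Type*} (S : Set (Equiv.Perm Ω)) (p : Ω × Ω) : Prop :=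
  ∀ g ∈ S, g p.1 = p.1 → g p.2 = p.2 → g = 1

/-- The number of regular orbits of the permutation set `S` on ordered pairs, i.e. the
number of regular suborbits. -/
noncomputable def regCount {Ω : Type*} (S : Set (Equiv.Perm Ω)) : ℕ :=
  Set.ncard {O : Set (Ω × Ω) | ∃ p : Ω × Ω, IsRegPair S p ∧
    O = {q | ∃ g ∈ S, q = (g p.1, g p.2)}}

/-- A subgroup `G ≤ Sym(Ω)` is primitive: it is transitive and every block (a set `B` such
that each `g ∈ G` maps `B` to itself or to a set disjoint from `B`) is trivial. -/
def IsPrimitiveSub {Ω : Type*} (G : Subgroup (Equiv.Perm Ω)) : Prop :=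
  (∀ a b : Ω, ∃ g ∈ G, g a = b) ∧
  ∀ B : Set Ω, (∀ g ∈ G, ⇑g '' B = B ∨ Disjoint (⇑g '' B) B) →
    B.Subsingleton ∨ B = Set.univ

/-!
If `L_α = 1` or `α = β`, then `γ = γ0` works. Otherwise apply the diameter hypothesis to
`G = L ≀ S_r` in its product action on `Γ^r`, which is primitive because `L` is primitive and
not regular. A pair `((a, …, a), c)` is a base of `G` exactly
when the coordinates `c i` lie in pairwise distinct regular suborbits of `L_a`; hence `G` has a
base of size two (one point from each of the `r` regular suborbits of `L_β`), while the
diagonal points `(α, …, α)` and `(β, …, β)` do not form a base because `r ≥ 2`. Their common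
neighbour `c` in the Saxl graph therefore has coordinates in `Σ_L(α)` which, being `r` points
in distinct regular suborbits of `L_β`, meet every one of them.
-/

open MulAction Equiv Function
open scoped Pointwise

theorem isPrimitiveSub_iff_isPreprimitive {Ω : Type*} (G : Subgroup (Perm Ω)) :
    IsPrimitiveSub G ↔ IsPreprimitive G Ω := by
  have isBlock_iff (B : Set Ω) :
      IsBlock G B ↔ ∀ g ∈ G, ⇑g '' B = B ∨ Disjoint (⇑g '' B) B := by
    rw [isBlock_iff_smul_eq_or_disjoint, Subtype.forall]
    rfl
  constructor
  · rintro ⟨htrans, hblock⟩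
    have : IsPretransitive G Ω := ⟨fun a b => by
      obtain ⟨g, hg, hgab⟩ := htrans a b
      exact ⟨⟨g, hg⟩, hgab⟩⟩
    exact ⟨fun hB => hblock _ ((isBlock_iff _).1 hB)⟩
  refine fun h => ⟨fun a b => ?_, fun B hB => ?_⟩
  · obtain ⟨g, hg⟩ := exists_smul_eq G a b
    exact ⟨g, g.2, hg⟩
  · exact ((isBlock_iff B).2 hB).subsingleton_or_eq_univ

section Preprimitive

variable {G X : Type*} [Group G] [MulAction G X]

theorem stabilizer_ne_bot_of_ne_bot [IsPretransitive G X] {a : X} (ha : stabilizer G a ≠ ⊥)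
    (b : X) : stabilizer G b ≠ ⊥ := by
  obtain ⟨g, rfl⟩ := exists_smul_eq G a b
  rwa [stabilizer_smul_eq_stabilizer_map_conj, Ne,
    Subgroup.map_eq_bot_iff_of_injective _ (MulAut.conj g).injective]

theorem stabilizer_eq_bot_of_normal [IsPretransitive G X] [FaithfulSMul G X] {a : X}
    (hN : (stabilizer G a).Normal) : stabilizer G a = ⊥ := by
  refine (Subgroup.eq_bot_iff_forall _).2 fun h hh => eq_of_smul_eq_smul (α := X) fun x => ?_
  obtain ⟨k, rfl⟩ := exists_smul_eq G a x
  have hconj : (k⁻¹ * h * k) • a = a := by simpa using hN.conj_mem _ hh k⁻¹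
  calc h • k • a = k • (k⁻¹ * h * k) • a := by simp [smul_smul, mul_assoc]
    _ = (1 : G) • k • a := by rw [hconj, one_smul]

/- Point stabilizers are maximal, so `G_a ≤ G_b` forces `G_a = G_b`; then the normalizer of
`G_a` is either `G_a`, which gives `b = a`, or all of `G`, which makes `G_a` normal, hence
trivial. -/
theorem not_stabilizer_le_stabilizer [IsPreprimitive G X] [FaithfulSMul G X] {a b : X}
    (ha : stabilizer G a ≠ ⊥) (hab : a ≠ b) : ¬ stabilizer G a ≤ stabilizer G b := by
  intro hle
  have : Nontrivial X := ⟨⟨a, b, hab⟩⟩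
  have hcoatom (x : X) := IsPreprimitive.isCoatom_stabilizer_of_isPreprimitive (G := G) x
  have heq : stabilizer G b = stabilizer G a :=
    ((hcoatom a).le_iff.1 hle).resolve_left (hcoatom b).1
  obtain ⟨g, rfl⟩ := exists_smul_eq G a b
  rcases (hcoatom a).le_iff.1 Subgroup.le_normalizer with hN | hN
  · exact ha (stabilizer_eq_bot_of_normal (Subgroup.normalizer_eq_top_iff.1 hN))
  · have hg : g ∈ Subgroup.normalizer (stabilizer G a : Set G) := by
      rw [Subgroup.mem_normalizer_iff_map_conj_eq]
      exact (stabilizer_smul_eq_stabilizer_map_conj g a).symm.trans heq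
    rw [hN] at hg
    exact hab (mem_stabilizer_iff.1 hg).symm

end Preprimitive

namespace Equiv.Perm

variable {ι Γ : Type*}

/- `Equiv.piCongr` at permutations: from a family `ι → Perm Γ` Lean cannot infer the fibres
of `Equiv.piCongr` itself. -/
def piCongr (σ : Perm ι) (z : ι → Perm Γ) : Perm (ι → Γ) :=
  Equiv.piCongr σ z

theorem piCongr_apply_apply (σ : Perm ι) (z : ι → Perm Γ) (f : ι → Γ) (i : ι) :
    piCongr σ z f (σ i) = z i (f i) :=
  Equiv.piCongr_apply_apply (W := fun _ => Γ) (Z := fun _ => Γ) σ z f i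

theorem piCongr_apply (σ : Perm ι) (z : ι → Perm Γ) (f : ι → Γ) (j : ι) :
    piCongr σ z f j = z (σ⁻¹ j) (f (σ⁻¹ j)) := by
  simpa using piCongr_apply_apply σ z f (σ⁻¹ j)

theorem piCongr_mul (σ τ : Perm ι) (z w : ι → Perm Γ) :
    piCongr σ z * piCongr τ w = piCongr (σ * τ) fun i => z (τ i) * w i := by
  ext f j
  simp [piCongr_apply, Perm.mul_apply]

theorem piCongr_one : piCongr (1 : Perm ι) (fun _ => (1 : Perm Γ)) = 1 := by
  ext f j
  simp [piCongr_apply]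

theorem piCongr_one_mulSingle_apply [DecidableEq ι] (i : ι) (h : Perm Γ) (f : ι → Γ) :
    piCongr 1 (Pi.mulSingle i h) f = update f i (h (f i)) := by
  ext j
  rw [piCongr_apply, inv_one]
  rcases eq_or_ne j i with rfl | hj <;> simp [*]

theorem piCongr_swap_one_apply [DecidableEq ι] (i j : ι) (f : ι → Γ) :
    piCongr (swap i j) (fun _ => (1 : Perm Γ)) f = f ∘ swap i j := by
  ext m
  simp [piCongr_apply]

theorem piCongr_eq_one_iff [Nontrivial Γ] {σ : Perm ι} {z : ι → Perm Γ} :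
    piCongr σ z = 1 ↔ σ = 1 ∧ z = 1 := by
  classical
  refine ⟨fun h => ?_, fun ⟨hσ, hz⟩ => hσ ▸ hz ▸ piCongr_one⟩
  have hz : z = 1 := by
    ext i x
    simpa [h] using (piCongr_apply_apply σ z (fun _ => x) i).symm
  subst hz
  refine ⟨Equiv.ext fun i => by_contra fun hi => ?_, rfl⟩
  obtain ⟨x, y, hxy⟩ := exists_pair_ne Γ
  have hi' : i ≠ σ i := Ne.symm hi
  have := piCongr_apply_apply σ 1 (update (fun _ => x) (σ i) y) i
  simp [h, update_of_ne hi'] at this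
  exact hxy this.symm

end Equiv.Perm

section Wreath

variable {Γ : Type}

def wreathProduct (k : ℕ) (L : Subgroup (Perm Γ)) : Subgroup (Perm (Fin k → Γ)) where
  carrier := WreathSet k L ⊤
  one_mem' := ⟨1, fun _ => 1, trivial, fun _ => L.one_mem, Perm.piCongr_one.symm⟩
  mul_mem' := by
    rintro _ _ ⟨σ, z, -, hz, rfl⟩ ⟨τ, w, -, hw, rfl⟩
    exact ⟨σ * τ, _, trivial, fun i => L.mul_mem (hz _) (hw i), Perm.piCongr_mul σ τ z w⟩
  inv_mem' := by
    rintro _ ⟨σ, z, -, hz, rfl⟩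
    refine ⟨σ⁻¹, fun i => (z (σ⁻¹ i))⁻¹, trivial, fun i => L.inv_mem (hz _), ?_⟩
    refine inv_eq_of_mul_eq_one_right ?_
    change Perm.piCongr σ z * Perm.piCongr _ _ = 1
    rw [Perm.piCongr_mul]
    simpa using Perm.piCongr_one

variable {k : ℕ} {L : Subgroup (Perm Γ)}

theorem piCongr_mem_wreathProduct (σ : Perm (Fin k)) {z : Fin k → Perm Γ}
    (hz : ∀ i, z i ∈ L) : Perm.piCongr σ z ∈ wreathProduct k L :=
  ⟨σ, z, trivial, hz, rfl⟩

theorem piCongr_mulSingle_mem_wreathProduct (i : Fin k) {h : Perm Γ} (hh : h ∈ L) :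
    Perm.piCongr 1 (Pi.mulSingle i h) ∈ wreathProduct k L :=
  piCongr_mem_wreathProduct 1 fun j => by
    rcases eq_or_ne j i with rfl | hj <;> simp [*, L.one_mem]

/- The slice of `B` through `p` in direction `i` is a block of `L`. An element of `L_{q i}`
moving `p i` fixes `q ∈ B`, hence stabilises `B`, so the slice is not a singleton. -/
theorem update_mem_of_isBlock [IsPreprimitive L Γ] (hL : ∀ x : Γ, stabilizer L x ≠ ⊥)
    {B : Set (Fin k → Γ)} (hB : IsBlock (wreathProduct k L) B) {p q : Fin k → Γ}
    (hp : p ∈ B) (hq : q ∈ B) {i : Fin k} (hpq : p i ≠ q i) (c : Γ) : update p i c ∈ B := by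
  let coord (h : L) : wreathProduct k L := ⟨_, piCongr_mulSingle_mem_wreathProduct i h.2⟩
  have hcoord (h : L) (f : Fin k → Γ) : coord h • f = update f i ((h : Perm Γ) (f i)) :=
    Perm.piCongr_one_mulSingle_apply i h f
  let line : Γ →ₑ[coord] (Fin k → Γ) :=
    { toFun := update p i
      map_smul' := fun h c => by simp [hcoord, Subgroup.smul_def, Perm.smul_def] }
  have hC := (hB.preimage line).subsingleton_or_eq_univ
  obtain ⟨h, hhq, hhp⟩ :=
    SetLike.not_le_iff_exists.1 (not_stabilizer_le_stabilizer (hL (q i)) hpq.symm)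
  have hpC : p i ∈ line ⁻¹' B := by
    change update p i (p i) ∈ B
    rwa [update_eq_self]
  have hhpC : h • p i ∈ line ⁻¹' B := by
    have hhq' : (h : Perm Γ) (q i) = q i := hhq
    have hBfix : coord h • B = B :=
      hB.smul_eq_of_mem hq (by rwa [hcoord, hhq', update_eq_self])
    have := Set.smul_mem_smul_set (a := coord h) hp
    rwa [hBfix, hcoord] at this
  rcases hC with hC | hC
  · exact absurd (hC hhpC hpC) hhp
  · exact Set.eq_univ_iff_forall.1 hC c

/- Coordinate permutations fix the diagonal point `(a, …, a)`, so they stabilise a block `B`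
through it; they turn one line of `B` through `(a, …, a)` into lines in every direction, and
changing one coordinate at a time along such lines reaches every point. -/
theorem isPreprimitive_wreathProduct [IsPreprimitive L Γ]
    (hL : ∀ x : Γ, stabilizer L x ≠ ⊥) : IsPreprimitive (wreathProduct k L) (Fin k → Γ) := by
  rcases isEmpty_or_nonempty Γ with _ | ⟨⟨a⟩⟩
  · exact .of_subsingleton
  have : IsPretransitive (wreathProduct k L) (Fin k → Γ) := ⟨fun f f' => by
    choose z hz using fun i => exists_smul_eq L (f i) (f' i)
    refine ⟨⟨_, piCongr_mem_wreathProduct 1 fun i => (z i).2⟩, funext fun j => ?_⟩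
    simpa [Subgroup.smul_def, Perm.smul_def, Perm.piCongr_apply] using hz j⟩
  refine .of_isTrivialBlock_base (fun _ => a) fun {B} ha hB =>
    or_iff_not_imp_left.2 fun hBs => ?_
  obtain ⟨q, hq, hqa⟩ := (Set.not_subsingleton_iff.1 hBs).exists_ne (fun _ => a)
  obtain ⟨i₀, hi₀⟩ := Function.ne_iff.1 hqa
  have hline := update_mem_of_isBlock hL hB ha hq (Ne.symm hi₀)
  have hlines (j : Fin k) (c : Γ) : update (fun _ => a) j c ∈ B := by
    let s : wreathProduct k L := ⟨_, piCongr_mem_wreathProduct (swap i₀ j) fun _ => L.one_mem⟩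
    have hs (f : Fin k → Γ) : s • f = f ∘ swap i₀ j := Perm.piCongr_swap_one_apply i₀ j f
    have hsB : s • B = B := hB.smul_eq_of_mem ha (by rwa [hs])
    have := Set.smul_mem_smul_set (a := s) (hline c)
    rwa [hsB, hs, update_comp_equiv, symm_swap, swap_apply_left] at this
  have hpiecewise (S : Finset (Fin k)) (t : Fin k → Γ) : S.piecewise t (fun _ => a) ∈ B := by
    induction S using Finset.induction_on with
    | empty => simpa using ha
    | insert j S hj ih =>
      rw [Finset.piecewise_insert]
      refine update_mem_of_isBlock hL hB ih (hlines j (q i₀)) ?_ (t j)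
      simpa [Finset.piecewise_eq_of_notMem _ _ _ hj] using hi₀.symm
  exact Set.eq_univ_of_forall fun t => by simpa using hpiecewise Finset.univ t

end Wreath

section Suborbits

variable {Γ : Type*} {L : Subgroup (Perm Γ)}

variable (L) in
def regularOrbits : Set (Set (Γ × Γ)) :=
  {O | ∃ p, IsRegPair (L : Set (Perm Γ)) p ∧ O = orbit L p}

theorem regCount_eq_ncard_regularOrbits :
    regCount (L : Set (Perm Γ)) = (regularOrbits L).ncard := by
  have horbit (p : Γ × Γ) :
      {q | ∃ g ∈ (L : Set (Perm Γ)), q = (g p.1, g p.2)} = orbit L p := by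
    ext q
    simp only [mem_orbit_iff, Subtype.exists, Subgroup.mk_smul, exists_prop, eq_comm (b := q)]
    rfl
  simp only [regCount, horbit, regularOrbits]

theorem isRegPair_iff_stabilizer_eq_bot {p : Γ × Γ} :
    IsRegPair (L : Set (Perm Γ)) p ↔ stabilizer L p = ⊥ := by
  simp [IsRegPair, Subgroup.eq_bot_iff_forall, mem_stabilizer_iff, Subgroup.smul_def,
    Perm.smul_def, Prod.ext_iff]

theorem IsRegPair.of_mem_orbit {p q : Γ × Γ} (hp : IsRegPair (L : Set (Perm Γ)) p)
    (hq : q ∈ orbit L p) : IsRegPair (L : Set (Perm Γ)) q := by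
  obtain ⟨g, rfl⟩ := hq
  rw [isRegPair_iff_stabilizer_eq_bot] at hp ⊢
  rw [stabilizer_smul_eq_stabilizer_map_conj, hp, Subgroup.map_bot]

/- The `L`-orbit of `(a, x)` stands for the `L_a`-orbit of `x`: the `c i` lie in pairwise
distinct regular suborbits of `L_a`. -/
variable (L) in
def InDistinctRegularSuborbits {ι : Type*} (a : Γ) (c : ι → Γ) : Prop :=
  (∀ i, IsRegPair (L : Set (Perm Γ)) (a, c i)) ∧ Injective fun i => orbit L (a, c i)

variable [Finite Γ]

variable (L) in
theorem exists_inDistinctRegularSuborbits [IsPretransitive L Γ] (a : Γ) :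
    ∃ c : Fin (regCount (L : Set (Perm Γ))) → Γ, InDistinctRegularSuborbits L a c := by
  have hrep (O : regularOrbits L) :
      ∃ x, IsRegPair (L : Set (Perm Γ)) (a, x) ∧ orbit L (a, x) = O := by
    obtain ⟨p, hp, hO⟩ := O.2
    obtain ⟨g, hg⟩ := exists_smul_eq L p.1 a
    have hmem : (a, g • p.2) ∈ orbit L p := ⟨g, by rw [← hg]; rfl⟩
    exact ⟨g • p.2, hp.of_mem_orbit hmem, hO ▸ orbit_eq_iff.2 hmem⟩
  choose x hx hxO using hrep
  let e : regularOrbits L ≃ Fin (regCount (L : Set (Perm Γ))) :=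
    Finite.equivFinOfCardEq (by rw [regCount_eq_ncard_regularOrbits, Nat.card_coe_set_eq])
  refine ⟨fun i => x (e.symm i), fun i => hx _, fun i j hij => ?_⟩
  exact e.symm.injective (Subtype.ext (by rw [← hxO, ← hxO]; exact hij))

theorem InDistinctRegularSuborbits.exists_mem_orbit {a : Γ}
    {c : Fin (regCount (L : Set (Perm Γ))) → Γ} (hc : InDistinctRegularSuborbits L a c) {x : Γ}
    (hx : IsRegPair (L : Set (Perm Γ)) (a, x)) : ∃ i, (a, c i) ∈ orbit L (a, x) := by
  have hrange : Set.range (fun i => orbit L (a, c i)) = regularOrbits L := by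
    refine Set.eq_of_subset_of_ncard_le ?_ ?_ (Set.toFinite _)
    · rintro _ ⟨i, rfl⟩
      exact ⟨_, hc.1 i, rfl⟩
    · rw [Set.ncard_range_of_injective hc.2, Nat.card_eq_fintype_card, Fintype.card_fin,
        regCount_eq_ncard_regularOrbits]
  have hxR : orbit L (a, x) ∈ regularOrbits L := ⟨_, hx, rfl⟩
  rw [← hrange] at hxR
  obtain ⟨i, hi⟩ := hxR
  exact ⟨i, orbit_eq_iff.1 hi⟩

end Suborbits

section RegularPairs

variable {Γ : Type} {k : ℕ} {L : Subgroup (Perm Γ)}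

theorem isRegPair_wreathProduct_of_inDistinctRegularSuborbits {a : Γ} {c : Fin k → Γ}
    (hc : InDistinctRegularSuborbits L a c) :
    IsRegPair (wreathProduct k L : Set (Perm (Fin k → Γ))) (fun _ => a, c) := by
  rintro _ ⟨σ, z, -, hz, rfl⟩ ha hcfix
  have hza (i : Fin k) : z i a = a :=
    (Perm.piCongr_apply_apply σ z _ i).symm.trans (congrFun ha (σ i))
  have hzc (i : Fin k) : z i (c i) = c (σ i) :=
    (Perm.piCongr_apply_apply σ z c i).symm.trans (congrFun hcfix (σ i))
  have hσ (i : Fin k) : σ i = i :=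
    hc.2 (orbit_eq_iff.2 ⟨⟨z i, hz i⟩, Prod.ext (hza i) (hzc i)⟩)
  have hz1 (i : Fin k) : z i = 1 := hc.1 i (z i) (hz i) (hza i) (by rw [hzc, hσ])
  obtain rfl : σ = 1 := Equiv.ext hσ
  obtain rfl : z = fun _ => 1 := funext hz1
  exact Perm.piCongr_one

theorem InDistinctRegularSuborbits.of_isRegPair_wreathProduct [Nontrivial Γ] {a : Γ}
    {c : Fin k → Γ}
    (h : IsRegPair (wreathProduct k L : Set (Perm (Fin k → Γ))) (fun _ => a, c)) :
    InDistinctRegularSuborbits L a c := by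
  refine ⟨fun i g hg hga hgc => ?_, fun i j hij => by_contra fun hne => ?_⟩
  · have := h _ (piCongr_mulSingle_mem_wreathProduct i hg)
      (by simp [Perm.piCongr_one_mulSingle_apply, hga])
      (by simp [Perm.piCongr_one_mulSingle_apply, hgc])
    simpa using (Perm.piCongr_eq_one_iff.1 this).2
  /- If `g ∈ L_a` maps `c j` to `c i`, then the transposition of the coordinates `i, j`,
  conjugated by `g` acting on coordinate `j`, is a nontrivial element fixing `(a, …, a)` and
  `c`. -/
  obtain ⟨g, hg⟩ := orbit_eq_iff.1 hij
  have hga : (g : Perm Γ) a = a := congrArg Prod.fst hg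
  have hgc : (g : Perm Γ) (c j) = c i := congrArg Prod.snd hg
  set x := Perm.piCongr 1 (Pi.mulSingle j (g : Perm Γ))
  set s := Perm.piCongr (swap i j) (fun _ => (1 : Perm Γ))
  have hx : x ∈ wreathProduct k L := piCongr_mulSingle_mem_wreathProduct j g.2
  have hs : s ∈ wreathProduct k L := piCongr_mem_wreathProduct _ fun _ => L.one_mem
  have hs_fix (f : Fin k → Γ) (hf : f i = f j) : s f = f := by
    rw [Perm.piCongr_swap_one_apply]
    ext m
    rcases eq_or_ne m i with rfl | hmi
    · simp [hf]
    rcases eq_or_ne m j with rfl | hmj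
    · simp [hf]
    · simp [swap_apply_of_ne_of_ne hmi hmj]
  have hconj_fix (f : Fin k → Γ) (hf : x f i = x f j) : (x⁻¹ * s * x) f = f := by
    rw [Perm.mul_apply, Perm.mul_apply, hs_fix _ hf, Perm.inv_eq_iff_eq]
  have hconj := h (x⁻¹ * s * x) (mul_mem (mul_mem (inv_mem hx) hs) hx)
    (hconj_fix _ (by simp [x, Perm.piCongr_one_mulSingle_apply, hga]))
    (hconj_fix _ (by simp [x, Perm.piCongr_one_mulSingle_apply, hgc, update_of_ne hne]))
  have hs1 : s = 1 := by
    rwa [mul_assoc, inv_mul_eq_one, eq_comm, mul_eq_right] at hconj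
  exact hne (swap_eq_one_iff.1 (Perm.piCongr_eq_one_iff.1 hs1).1)

theorem isRegPair_wreathProduct_const_iff [Nontrivial Γ] {a : Γ} {c : Fin k → Γ} :
    IsRegPair (wreathProduct k L : Set (Perm (Fin k → Γ))) (fun _ => a, c) ↔
      InDistinctRegularSuborbits L a c :=
  ⟨.of_isRegPair_wreathProduct, isRegPair_wreathProduct_of_inDistinctRegularSuborbits⟩

end RegularPairs

theorem stmt17_general {Γ : Type} [Fintype Γ] (L : Subgroup (Equiv.Perm Γ))
    (hLprim : IsPrimitiveSub L)
    (hr : 2 ≤ regCount (L : Set (Equiv.Perm Γ)))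
    (hdiam : ∀ (Ω : Type) (_ : Fintype Ω) (G : Subgroup (Equiv.Perm Ω)),
      IsPrimitiveSub G → (∃ p : Ω × Ω, IsRegPair (G : Set (Equiv.Perm Ω)) p) →
      ∀ a b : Ω, a ≠ b →
        (IsRegPair (G : Set (Equiv.Perm Ω)) (a, b) ∨
          ∃ c : Ω, IsRegPair (G : Set (Equiv.Perm Ω)) (a, c) ∧
            IsRegPair (G : Set (Equiv.Perm Ω)) (b, c))) :
    ∀ α β γ0 : Γ, (∀ g ∈ L, g β = β → g γ0 = γ0 → g = 1) →
      ∃ γ : Γ, (∃ g ∈ L, g β = β ∧ g γ0 = γ) ∧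
        (∀ g ∈ L, g α = α → g γ = γ → g = 1) := by
  intro α β γ0 hγ0
  have := (isPrimitiveSub_iff_isPreprimitive L).1 hLprim
  have hγ0_mem : ∃ g ∈ L, g β = β ∧ g γ0 = γ0 := ⟨1, L.one_mem, rfl, rfl⟩
  by_cases hα : stabilizer L α = ⊥
  · refine ⟨γ0, hγ0_mem, fun g hg hgα _ => ?_⟩
    exact congrArg Subtype.val ((Subgroup.eq_bot_iff_forall _).1 hα ⟨g, hg⟩ hgα)
  obtain rfl | hαβ := eq_or_ne α β
  · exact ⟨γ0, hγ0_mem, hγ0⟩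
  have : Nontrivial Γ := ⟨⟨α, β, hαβ⟩⟩
  set r := regCount (L : Set (Perm Γ))
  have hW := (isPrimitiveSub_iff_isPreprimitive (wreathProduct r L)).2
    (isPreprimitive_wreathProduct (stabilizer_ne_bot_of_ne_bot hα))
  obtain ⟨δ, hδ⟩ := exists_inDistinctRegularSuborbits L β
  have hconst : (fun _ : Fin r => α) ≠ fun _ => β := fun h => hαβ (congrFun h ⟨0, by omega⟩)
  rcases hdiam _ inferInstance _ hW ⟨_, isRegPair_wreathProduct_const_iff.2 hδ⟩ _ _ hconst
    with hbase | ⟨c, hαc, hβc⟩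
  · have : Nontrivial (Fin r) := Fin.nontrivial_iff_two_le.2 hr
    exact absurd (isRegPair_wreathProduct_const_iff.1 hbase).2 not_injective_const
  · obtain ⟨i, g, hg⟩ := (isRegPair_wreathProduct_const_iff.1 hβc).exists_mem_orbit hγ0
    exact ⟨c i, ⟨g, g.2, congrArg Prod.fst hg, congrArg Prod.snd hg⟩,
      (isRegPair_wreathProduct_const_iff.1 hαc).1 i⟩

/-- **Proposition 5.11.** Let `L ≤ Sym(Γ)` be a finite base-two primitive group with
`r(L) ≥ 2` regular suborbits. If the Saxl graph of every finite base-two primitive group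
has diameter at most 2, then for all `α, β ∈ Γ`, the Saxl neighbourhood `Σ_L(α)` meets
every regular `L_β`-orbit on `Γ`. -/
theorem stmt17 {Γ : Type} [Fintype Γ] [Nonempty Γ] (L : Subgroup (Equiv.Perm Γ))
    (hLprim : IsPrimitiveSub L)
    (hr : 2 ≤ regCount (L : Set (Equiv.Perm Γ)))
    (hb2 : ∃ p : Γ × Γ, IsRegPair (L : Set (Equiv.Perm Γ)) p)
    (hdiam : ∀ (Ω : Type) (_ : Fintype Ω) (G : Subgroup (Equiv.Perm Ω)),
      IsPrimitiveSub G → (∃ p : Ω × Ω, IsRegPair (G : Set (Equiv.Perm Ω)) p) →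
      ∀ a b : Ω, a ≠ b →
        (IsRegPair (G : Set (Equiv.Perm Ω)) (a, b) ∨
          ∃ c : Ω, IsRegPair (G : Set (Equiv.Perm Ω)) (a, c) ∧
            IsRegPair (G : Set (Equiv.Perm Ω)) (b, c))) :
    ∀ α β γ0 : Γ, (∀ g ∈ L, g β = β → g γ0 = γ0 → g = 1) →
      ∃ γ : Γ, (∃ g ∈ L, g β = β ∧ g γ0 = γ) ∧
        (∀ g ∈ L, g α = α → g γ = γ → g = 1) :=
  stmt17_general L hLprim hr hdiam
end
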